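/- arXiv:2410.03368 — 4 statements merged into one kernel-verified Lean document; each statement's English description precedes it below -/
import Mathlib

section
/- Let (Ω, 𝓕, P) be a probability space with a filtration (𝓕_t)_{t∈[0,T]} of sub-σ-algebras of 𝓕, and let W : [0,T] → Ω → ℝ^d be a martingale with respect to (𝓕_t) and P with W_0 = 0. Let H : [0,T] × Ω → ℝ^d be jointly measurable, adapted to (𝓕_t), and satisfy E_P[∫_0^T ‖H_s‖ ds] < ∞. Define Y_t(ω) = Y_0(ω) + ∫_0^t H_s(ω) ds + W_t(ω). Let (𝓡_t)_{t∈[0,T]} be a filtration with 𝓡_t ⊆ 𝓕_t for every t and such that Y_t − Y_0 is 𝓡_t-measurable for every t. Let G : [0,T] × Ω → ℝ^d be jointly measurable, adapted to (𝓡_t), with E_P[∫_0^T ‖G_s‖ ds] < ∞, and such that for every s ∈ [0,T], G_s is a version of the conditional expectation E_P[H_s | 𝓡_s] (i.e., G_s = E_P[H_s | 𝓡_s] P-almost surely). Then the process M_t := Y_t − Y_0 − ∫_0^t G_s ds, t ∈ [0,T], is a martingale with respect to the filtration (𝓡_t) and the measure P. -/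
/-!
Writing `M_t = ∫_0^t (H_s - G_s) ds + W_t`, the identity `∫_A M_t = ∫_A M_τ` for `A ∈ 𝓡_τ`
splits into `∫_A W_t = ∫_A W_τ`, true because `A ∈ 𝓕_τ`, and `∫_A ∫_τ^t (H_s - G_s) ds = 0`,
which after Fubini is `∫_A H_s = ∫_A E[H_s | 𝓡_s]` for `s > τ`.

The delicate point is that `M_t` is `𝓡_t`-measurable although `G` is only jointly measurable,
not progressive. Every `G_s` with `s ≤ t` is `𝓡_t`-measurable, and then `X = ∫ G_s ds` agrees
with `E[X | 𝓡_t]`: both have the same integral over any measurable `B`, as one sees by moving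
`E[1_B | 𝓡_t]` across the conditional expectation, once for `X` and once for each `G_s`,
and exchanging the integrals.
-/

open MeasureTheory Set Function
open scoped ENNReal

section ConditionalExpectation

variable {Ω E : Type*} {m mΩ : MeasurableSpace Ω} {μ : Measure Ω}
  [NormedAddCommGroup E] [NormedSpace ℝ E] [CompleteSpace E]

lemma integral_smul_condExp (hm : m ≤ mΩ) [SigmaFinite (μ.trim hm)] {f : Ω → ℝ} {g : Ω → E}
    (hf : AEStronglyMeasurable[m] f μ) (hfg : Integrable (f • g) μ) (hg : Integrable g μ) :
    ∫ ω, f ω • μ[g | m] ω ∂μ = ∫ ω, f ω • g ω ∂μ := by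
  calc ∫ ω, f ω • μ[g | m] ω ∂μ = ∫ ω, μ[f • g | m] ω ∂μ :=
        integral_congr_ae (condExp_smul_of_aestronglyMeasurable_left hf hfg hg).symm
    _ = ∫ ω, f ω • g ω ∂μ := integral_condExp hm

lemma setIntegral_eq_integral_condExp_indicator_smul (hm : m ≤ mΩ) [IsFiniteMeasure μ]
    {g : Ω → E} (hg : Integrable g μ) (hgm : AEStronglyMeasurable[m] g μ)
    {B : Set Ω} (hB : MeasurableSet B) :
    ∫ ω in B, g ω ∂μ = ∫ ω, μ[B.indicator (fun _ => (1 : ℝ)) | m] ω • g ω ∂μ := by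
  set χ : Ω → ℝ := B.indicator fun _ => 1
  have hχ : Integrable χ μ := (integrable_const 1).indicator hB
  have hχg : Integrable (χ • g) μ :=
    hg.bdd_smul 1 hχ.aestronglyMeasurable
      (ae_of_all _ fun ω => by by_cases h : ω ∈ B <;> simp [χ, h])
  calc ∫ ω in B, g ω ∂μ = ∫ ω, χ ω • g ω ∂μ := by
        rw [← integral_indicator hB]
        congr 1 with ω
        by_cases h : ω ∈ B <;> simp [χ, h]
    _ = ∫ ω, μ[χ • g | m] ω ∂μ := (integral_condExp hm).symm
    _ = ∫ ω, μ[χ | m] ω • g ω ∂μ :=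
        integral_congr_ae (condExp_smul_of_aestronglyMeasurable_right hχ hχg hgm)

lemma setIntegral_eq_of_condExp_ae_eq (hm : m ≤ mΩ) [SigmaFinite (μ.trim hm)] {f g : Ω → E}
    (hf : Integrable f μ) (hfg : μ[f | m] =ᵐ[μ] g) {A : Set Ω} (hA : MeasurableSet[m] A) :
    ∫ ω in A, g ω ∂μ = ∫ ω in A, f ω ∂μ := by
  rw [← setIntegral_condExp hm hf hA]
  exact integral_congr_ae (ae_restrict_of_ae hfg.symm)

end ConditionalExpectation

section ParametricIntegral

variable {α Ω E : Type*} [MeasurableSpace α] {m mΩ : MeasurableSpace Ω}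
  [NormedAddCommGroup E] [NormedSpace ℝ E]
  {μ : Measure α} [SFinite μ] {P : Measure Ω} [SFinite P] {f : α → Ω → E}

lemma integral_smul_integral_comm (hf : Integrable (uncurry f) (μ.prod P)) {φ : Ω → ℝ}
    (hφ : AEStronglyMeasurable φ P) (C : ℝ) (hφC : ∀ᵐ ω ∂P, ‖φ ω‖ ≤ C) :
    ∫ ω, φ ω • ∫ s, f s ω ∂μ ∂P = ∫ s, ∫ ω, φ ω • f s ω ∂P ∂μ := by
  simp_rw [← integral_smul]
  refine (integral_integral_swap ?_).symm
  exact hf.bdd_smul C hφ.comp_snd (Measure.quasiMeasurePreserving_snd.ae hφC)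

lemma setIntegral_integral_comm (hf : Integrable (uncurry f) (μ.prod P)) {A : Set Ω} :
    ∫ ω in A, ∫ s, f s ω ∂μ ∂P = ∫ s, ∫ ω in A, f s ω ∂P ∂μ :=
  (integral_integral_swap <|
    hf.mono_measure (Measure.prod_mono le_rfl Measure.restrict_le_self)).symm

theorem aestronglyMeasurable_integral_of_ae_aestronglyMeasurable [CompleteSpace E]
    (hm : m ≤ mΩ) [IsFiniteMeasure P]
    (hf : Integrable (uncurry f) (μ.prod P)) (hfm : ∀ᵐ s ∂μ, AEStronglyMeasurable[m] (f s) P) :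
    AEStronglyMeasurable[m] (fun ω => ∫ s, f s ω ∂μ) P := by
  set X : Ω → E := fun ω => ∫ s, f s ω ∂μ
  have hX : Integrable X P := hf.integral_prod_right
  refine (stronglyMeasurable_condExp (f := X)).aestronglyMeasurable.congr <|
    Integrable.ae_eq_of_forall_setIntegral_eq _ _ integrable_condExp hX fun B hB _ => ?_
  set c : Ω → ℝ := P[B.indicator (fun _ => (1 : ℝ)) | m]
  have hc : AEStronglyMeasurable c P := (stronglyMeasurable_condExp.mono hm).aestronglyMeasurable
  have hc_le : ∀ᵐ ω ∂P, ‖c ω‖ ≤ 1 :=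
    ae_bdd_abs_condExp_of_ae_bdd_abs (ae_of_all _ fun ω => by by_cases h : ω ∈ B <;> simp [h])
  calc ∫ ω in B, P[X | m] ω ∂P = ∫ ω, c ω • P[X | m] ω ∂P :=
        setIntegral_eq_integral_condExp_indicator_smul hm integrable_condExp
          stronglyMeasurable_condExp.aestronglyMeasurable hB
    _ = ∫ ω, c ω • X ω ∂P :=
        integral_smul_condExp hm stronglyMeasurable_condExp.aestronglyMeasurable
          (hX.bdd_smul 1 hc hc_le) hX
    _ = ∫ s, ∫ ω, c ω • f s ω ∂P ∂μ := integral_smul_integral_comm hf hc 1 hc_le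
    _ = ∫ s, ∫ ω in B, f s ω ∂P ∂μ := by
        refine integral_congr_ae ?_
        filter_upwards [hf.prod_right_ae, hfm] with s hs hsm
        exact (setIntegral_eq_integral_condExp_indicator_smul hm hs hsm hB).symm
    _ = ∫ ω in B, X ω ∂P := (setIntegral_integral_comm hf).symm

end ParametricIntegral

section DriftIntegral

variable {α Ω E : Type*} [MeasurableSpace α] {mΩ : MeasurableSpace Ω}
  [NormedAddCommGroup E] {P : Measure Ω} [SFinite P]

lemma integrable_prod_of_lintegral_lt_top {μ : Measure α} [SFinite μ] {f : α → Ω → E}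
    (hf : AEStronglyMeasurable (uncurry f) (μ.prod P))
    (h : ∫⁻ ω, ∫⁻ s, ‖f s ω‖ₑ ∂μ ∂P < ∞) : Integrable (uncurry f) (μ.prod P) :=
  ⟨hf, by rw [HasFiniteIntegral, lintegral_prod_symm _ hf.enorm]; exact h⟩

lemma MeasureTheory.Integrable.mono_restrict_prod {μ : Measure α} {f : α × Ω → E} {s t : Set α}
    (hf : Integrable f ((μ.restrict s).prod P)) (hts : t ⊆ s) :
    Integrable f ((μ.restrict t).prod P) :=
  hf.mono_measure (Measure.prod_mono (Measure.restrict_mono hts le_rfl) le_rfl)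

variable [NormedSpace ℝ E] {D : ℝ → Ω → E} {a b c : ℝ}

lemma integral_Ioc_add_integral_Ioc_ae
    (hD : Integrable (uncurry D) ((volume.restrict (Ioc a c)).prod P))
    (hab : a ≤ b) (hbc : b ≤ c) :
    ∀ᵐ ω ∂P, (∫ s in Ioc a b, D s ω) + ∫ s in Ioc b c, D s ω = ∫ s in Ioc a c, D s ω := by
  filter_upwards [hD.prod_left_ae] with ω hω
  replace hω : IntegrableOn (D · ω) (Ioc a c) := hω
  rw [← setIntegral_union (Ioc_disjoint_Ioc_of_le le_rfl) measurableSet_Ioc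
    (hω.mono_set (Ioc_subset_Ioc_right hbc)) (hω.mono_set (Ioc_subset_Ioc_left hab)),
    Ioc_union_Ioc_eq_Ioc hab hbc]

lemma setIntegral_integral_Ioc_eq_of_ae_setIntegral_eq_zero
    (hD : Integrable (uncurry D) ((volume.restrict (Ioc a c)).prod P))
    (hab : a ≤ b) (hbc : b ≤ c) {A : Set Ω}
    (hA : ∀ᵐ s ∂(volume.restrict (Ioc b c)), ∫ ω in A, D s ω ∂P = 0) :
    ∫ ω in A, (∫ s in Ioc a c, D s ω) ∂P = ∫ ω in A, (∫ s in Ioc a b, D s ω) ∂P := by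
  have hDbc := hD.mono_restrict_prod (Ioc_subset_Ioc_left hab)
  have hIab : Integrable (fun ω => ∫ s in Ioc a b, D s ω) P :=
    (hD.mono_restrict_prod (Ioc_subset_Ioc_right hbc)).integral_prod_right
  have hIbc : Integrable (fun ω => ∫ s in Ioc b c, D s ω) P := hDbc.integral_prod_right
  rw [← integral_congr_ae (ae_restrict_of_ae (integral_Ioc_add_integral_Ioc_ae hD hab hbc)),
    integral_add hIab.integrableOn hIbc.integrableOn,
    setIntegral_integral_comm hDbc, integral_eq_zero_of_ae hA, add_zero]

lemma aestronglyMeasurable_integral_Ioc_of_adapted [CompleteSpace E] [IsFiniteMeasure P]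
    {R : ℝ → MeasurableSpace Ω} (hRt : R b ≤ mΩ) (hR_mono : ∀ s ∈ Ioc a b, R s ≤ R b)
    (hD : Integrable (uncurry D) ((volume.restrict (Ioc a b)).prod P))
    (hD_adapted : ∀ s ∈ Ioc a b, StronglyMeasurable[R s] (D s)) :
    AEStronglyMeasurable[R b] (fun ω => ∫ s in Ioc a b, D s ω) P :=
  aestronglyMeasurable_integral_of_ae_aestronglyMeasurable hRt hD <|
    (ae_restrict_mem measurableSet_Ioc).mono fun s hs => ((hD_adapted s hs).mono (hR_mono s hs)).aestronglyMeasurable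

lemma ae_setIntegral_sub_condExp_eq_zero [CompleteSpace E] [IsFiniteMeasure P]
    {R : ℝ → MeasurableSpace Ω} {H G : ℝ → Ω → E} {I : Set ℝ} (hI : MeasurableSet I)
    (hR : ∀ s ∈ I, R s ≤ mΩ) (hH : Integrable (uncurry H) ((volume.restrict I).prod P))
    (hG : Integrable (uncurry G) ((volume.restrict I).prod P))
    (hG_ver : ∀ s ∈ I, G s =ᵐ[P] P[H s | R s]) {A : Set Ω} (hA : ∀ s ∈ I, MeasurableSet[R s] A) :
    ∀ᵐ s ∂(volume.restrict I), ∫ ω in A, (H s ω - G s ω) ∂P = 0 := by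
  filter_upwards [hH.prod_right_ae, hG.prod_right_ae, ae_restrict_mem hI] with s hHs hGs hs
  rw [integral_sub (f := H s) (g := G s) hHs.integrableOn hGs.integrableOn, sub_eq_zero]
  exact (setIntegral_eq_of_condExp_ae_eq (hR s hs) hHs (hG_ver s hs).symm (hA s hs)).symm

end DriftIntegral

theorem innovation_martingale_general
    {Ω : Type*} {mΩ : MeasurableSpace Ω}
    (P : Measure Ω) [IsProbabilityMeasure P]
    {d : ℕ} (T : ℝ)
    -- the filtration 𝓕
    (F : ℝ → MeasurableSpace Ω)
    (hF_le : ∀ t, F t ≤ mΩ)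
    -- W is an 𝓕-martingale on [0,T] with W 0 = 0
    (W : ℝ → Ω → EuclideanSpace ℝ (Fin d))
    (hW_int : ∀ t ∈ Set.Icc (0 : ℝ) T, Integrable (W t) P)
    (hW_mart : ∀ τ ∈ Set.Icc (0 : ℝ) T, ∀ t ∈ Set.Icc (0 : ℝ) T, τ ≤ t →
      P[W t | F τ] =ᵐ[P] W τ)
    -- the drift H: jointly measurable, 𝓕-adapted, with E[∫_0^T ‖H_s‖ ds] < ∞
    (H : ℝ → Ω → EuclideanSpace ℝ (Fin d))
    (hH_meas : Measurable (Function.uncurry H))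
    (hH_int : ∫⁻ ω, (∫⁻ s in Set.Ioc (0 : ℝ) T, (‖H s ω‖₊ : ℝ≥0∞)) ∂P < ⊤)
    -- the measurement process Y
    (Y : ℝ → Ω → EuclideanSpace ℝ (Fin d)) (Y₀ : Ω → EuclideanSpace ℝ (Fin d))
    (hY : ∀ t ω, Y t ω = Y₀ ω + (∫ s in Set.Ioc (0 : ℝ) t, H s ω) + W t ω)
    -- the smaller filtration 𝓡
    (R : ℝ → MeasurableSpace Ω)
    (hR_le : ∀ t, R t ≤ F t) (hR_mono : ∀ s t, s ≤ t → R s ≤ R t)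
    (hYR : ∀ t ∈ Set.Icc (0 : ℝ) T,
      StronglyMeasurable[R t] (fun ω => Y t ω - Y₀ ω))
    -- G is a jointly measurable 𝓡-adapted version of E[H_s | 𝓡_s]
    (G : ℝ → Ω → EuclideanSpace ℝ (Fin d))
    (hG_meas : Measurable (Function.uncurry G))
    (hG_adapted : ∀ t ∈ Set.Icc (0 : ℝ) T, StronglyMeasurable[R t] (G t))
    (hG_int : ∫⁻ ω, (∫⁻ s in Set.Ioc (0 : ℝ) T, (‖G s ω‖₊ : ℝ≥0∞)) ∂P < ⊤)
    (hG_ver : ∀ s ∈ Set.Icc (0 : ℝ) T, G s =ᵐ[P] P[H s | R s])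
    -- the innovation process M
    (M : ℝ → Ω → EuclideanSpace ℝ (Fin d))
    (hM : ∀ t ω, M t ω = Y t ω - Y₀ ω - ∫ s in Set.Ioc (0 : ℝ) t, G s ω) :
    -- M is a martingale with respect to (𝓡_t) and P
    (∀ t ∈ Set.Icc (0 : ℝ) T,
        AEStronglyMeasurable[R t] (M t) P ∧ Integrable (M t) P) ∧
    (∀ τ ∈ Set.Icc (0 : ℝ) T, ∀ t ∈ Set.Icc (0 : ℝ) T, τ ≤ t →
        P[M t | R τ] =ᵐ[P] M τ) := by
  have hRle : ∀ t, R t ≤ mΩ := fun t => (hR_le t).trans (hF_le t)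
  have hHT : Integrable (uncurry H) ((volume.restrict (Ioc 0 T)).prod P) :=
    integrable_prod_of_lintegral_lt_top hH_meas.aestronglyMeasurable hH_int
  have hGT : Integrable (uncurry G) ((volume.restrict (Ioc 0 T)).prod P) :=
    integrable_prod_of_lintegral_lt_top hG_meas.aestronglyMeasurable hG_int
  set K : ℝ → Ω → EuclideanSpace ℝ (Fin d) := fun s ω => H s ω - G s ω
  have hKT : Integrable (uncurry K) ((volume.restrict (Ioc 0 T)).prod P) := hHT.sub hGT
  have hM_ae : ∀ t ∈ Icc 0 T, M t =ᵐ[P] fun ω => (∫ s in Ioc 0 t, K s ω) + W t ω := by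
    intro t ht
    have hsub : Ioc 0 t ⊆ Ioc 0 T := Ioc_subset_Ioc_right ht.2
    filter_upwards [(hHT.mono_restrict_prod hsub).prod_left_ae,
      (hGT.mono_restrict_prod hsub).prod_left_ae] with ω hHω hGω
    simp only [K]
    rw [hM, hY, integral_sub (f := (H · ω)) (g := (G · ω)) hHω hGω]
    abel
  have hK_int : ∀ t ∈ Icc 0 T, Integrable (fun ω => ∫ s in Ioc 0 t, K s ω) P := fun t ht =>
    (hKT.mono_restrict_prod (Ioc_subset_Ioc_right ht.2)).integral_prod_right
  have hM_int : ∀ t ∈ Icc 0 T, Integrable (M t) P := fun t ht =>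
    ((hK_int t ht).add (hW_int t ht)).congr (hM_ae t ht).symm
  have hM_meas : ∀ t ∈ Icc 0 T, AEStronglyMeasurable[R t] (M t) P := fun t ht =>
    ((hYR t ht).aestronglyMeasurable.sub <| aestronglyMeasurable_integral_Ioc_of_adapted (hRle t)
      (fun s hs => hR_mono s t hs.2) (hGT.mono_restrict_prod (Ioc_subset_Ioc_right ht.2))
      fun s hs => hG_adapted s ⟨hs.1.le, hs.2.trans ht.2⟩).congr
      (ae_of_all _ fun ω => (hM t ω).symm)
  refine ⟨fun t ht => ⟨hM_meas t ht, hM_int t ht⟩, fun τ hτ t ht hτt => ?_⟩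
  refine (ae_eq_condExp_of_forall_setIntegral_eq (hRle τ) (hM_int t ht)
    (fun _ _ _ => (hM_int τ hτ).integrableOn) (fun A hA _ => ?_) (hM_meas τ hτ)).symm
  have hM_setIntegral : ∀ u ∈ Icc 0 T, ∫ ω in A, M u ω ∂P
      = ∫ ω in A, (∫ s in Ioc 0 u, K s ω) ∂P + ∫ ω in A, W u ω ∂P := fun u hu => by
    rw [integral_congr_ae (ae_restrict_of_ae (hM_ae u hu)),
      integral_add (hK_int u hu).integrableOn (hW_int u hu).integrableOn]
  have hsub : Ioc τ t ⊆ Ioc 0 T := Ioc_subset_Ioc hτ.1 ht.2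
  have hK_A : ∀ᵐ s ∂(volume.restrict (Ioc τ t)), ∫ ω in A, K s ω ∂P = 0 :=
    ae_setIntegral_sub_condExp_eq_zero measurableSet_Ioc (fun s _ => hRle s)
      (hHT.mono_restrict_prod hsub) (hGT.mono_restrict_prod hsub)
      (fun s hs => hG_ver s ⟨hτ.1.trans hs.1.le, hs.2.trans ht.2⟩)
      fun s hs => hR_mono τ s hs.1.le A hA
  rw [hM_setIntegral τ hτ, hM_setIntegral t ht,
    setIntegral_integral_Ioc_eq_of_ae_setIntegral_eq_zero
      (hKT.mono_restrict_prod (Ioc_subset_Ioc_right ht.2)) hτ.1 hτt hK_A,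
    setIntegral_eq_of_condExp_ae_eq (hF_le τ) (hW_int t ht) (hW_mart τ hτ t ht hτt)
      (hR_le τ A hA)]

/-- Innovation theorem (martingale-property core): if `Y_t = Y_0 + ∫_0^t H_s ds + W_t`
with `W` an `𝓕`-martingale vanishing at `0` and `H` an adapted integrable drift, and if
`G_s` is a version of `E[H_s | 𝓡_s]` for a smaller filtration `𝓡` making `Y_t − Y_0`
measurable, then `M_t = Y_t − Y_0 − ∫_0^t G_s ds` is a martingale for `(𝓡_t)` and `P`. -/
theorem innovation_martingale
    {Ω : Type*} {mΩ : MeasurableSpace Ω}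
    (P : Measure Ω) [IsProbabilityMeasure P]
    {d : ℕ} (T : ℝ) (hT : 0 < T)
    -- the filtration 𝓕
    (F : ℝ → MeasurableSpace Ω)
    (hF_le : ∀ t, F t ≤ mΩ) (hF_mono : ∀ s t, s ≤ t → F s ≤ F t)
    -- W is an 𝓕-martingale on [0,T] with W 0 = 0
    (W : ℝ → Ω → EuclideanSpace ℝ (Fin d))
    (hW_adapted : ∀ t ∈ Set.Icc (0 : ℝ) T, StronglyMeasurable[F t] (W t))
    (hW_int : ∀ t ∈ Set.Icc (0 : ℝ) T, Integrable (W t) P)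
    (hW_mart : ∀ τ ∈ Set.Icc (0 : ℝ) T, ∀ t ∈ Set.Icc (0 : ℝ) T, τ ≤ t →
      P[W t | F τ] =ᵐ[P] W τ)
    (hW0 : W 0 = fun _ => 0)
    -- the drift H: jointly measurable, 𝓕-adapted, with E[∫_0^T ‖H_s‖ ds] < ∞
    (H : ℝ → Ω → EuclideanSpace ℝ (Fin d))
    (hH_meas : Measurable (Function.uncurry H))
    (hH_adapted : ∀ t ∈ Set.Icc (0 : ℝ) T, StronglyMeasurable[F t] (H t))
    (hH_int : ∫⁻ ω, (∫⁻ s in Set.Ioc (0 : ℝ) T, (‖H s ω‖₊ : ℝ≥0∞)) ∂P < ⊤)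
    -- the measurement process Y
    (Y : ℝ → Ω → EuclideanSpace ℝ (Fin d)) (Y₀ : Ω → EuclideanSpace ℝ (Fin d))
    (hY : ∀ t ω, Y t ω = Y₀ ω + (∫ s in Set.Ioc (0 : ℝ) t, H s ω) + W t ω)
    -- the smaller filtration 𝓡
    (R : ℝ → MeasurableSpace Ω)
    (hR_le : ∀ t, R t ≤ F t) (hR_mono : ∀ s t, s ≤ t → R s ≤ R t)
    (hYR : ∀ t ∈ Set.Icc (0 : ℝ) T,
      StronglyMeasurable[R t] (fun ω => Y t ω - Y₀ ω))
    -- G is a jointly measurable 𝓡-adapted version of E[H_s | 𝓡_s]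
    (G : ℝ → Ω → EuclideanSpace ℝ (Fin d))
    (hG_meas : Measurable (Function.uncurry G))
    (hG_adapted : ∀ t ∈ Set.Icc (0 : ℝ) T, StronglyMeasurable[R t] (G t))
    (hG_int : ∫⁻ ω, (∫⁻ s in Set.Ioc (0 : ℝ) T, (‖G s ω‖₊ : ℝ≥0∞)) ∂P < ⊤)
    (hG_ver : ∀ s ∈ Set.Icc (0 : ℝ) T, G s =ᵐ[P] P[H s | R s])
    -- the innovation process M
    (M : ℝ → Ω → EuclideanSpace ℝ (Fin d))
    (hM : ∀ t ω, M t ω = Y t ω - Y₀ ω - ∫ s in Set.Ioc (0 : ℝ) t, G s ω) :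
    -- M is a martingale with respect to (𝓡_t) and P
    (∀ t ∈ Set.Icc (0 : ℝ) T,
        AEStronglyMeasurable[R t] (M t) P ∧ Integrable (M t) P) ∧
    (∀ τ ∈ Set.Icc (0 : ℝ) T, ∀ t ∈ Set.Icc (0 : ℝ) T, τ ≤ t →
        P[M t | R τ] =ᵐ[P] M τ) :=
  innovation_martingale_general P T F hF_le W hW_int hW_mart H hH_meas hH_int Y Y₀ hY R hR_le
    hR_mono hYR G hG_meas hG_adapted hG_int hG_ver M hM
end

section
/- Let (Ω, 𝓕, P) be a probability space, let Y : Ω → 𝒴 and φ : Ω → 𝒮 be measurable maps into standard Borel spaces, and let τ : 𝒴 → Ψ be a measurable map into a standard Borel space. Assume that for every bounded σ(φ)-measurable function f : Ω → ℝ, E_P[f | σ(τ ∘ Y)] = E_P[f | σ(Y)] P-almost surely. Then the mutual information is preserved: klDiv( P.map ⟨Y, φ⟩ , (P.map Y).prod (P.map φ) ) = klDiv( P.map ⟨τ∘Y, φ⟩ , (P.map (τ∘Y)).prod (P.map φ) ). -/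
open MeasureTheory
open scoped ENNReal
open Classical

noncomputable def klDiv {α : Type*} [MeasurableSpace α] (μ ν : Measure α) : ℝ≥0∞ :=
  if μ ≪ ν ∧ Integrable (fun x => Real.log ((μ.rnDeriv ν x).toReal)) μ then
    ENNReal.ofReal (∫ x, Real.log ((μ.rnDeriv ν x).toReal) ∂μ)
  else ⊤

/-!
Sufficiency says that the conditional law of `φ` given `Y` depends on `Y` only through `τ Y`:
the joint law of `(Y, φ)` is `law Y ⊗ₘ η (τ ·)`, where `η` is the conditional law of `φ` given
`τ ∘ Y`, while the joint law of `(τ ∘ Y, φ)` is `law (τ ∘ Y) ⊗ₘ η`. Writing the product of the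
marginals as a composition product with the constant kernel `law φ`, both divergences are governed
by the kernel Radon–Nikodym derivative of `η` with respect to that constant kernel: the density on
`𝒴 × 𝒮` is its pullback along `τ × id`, absolute continuity holds on both sides or on neither,
and the two log-likelihood integrals agree by change of variables along `τ × id`.
-/

open ProbabilityTheory

namespace MeasureTheory.Measure

variable {α β γ : Type*} {mα : MeasurableSpace α} {mβ : MeasurableSpace β}
  {mγ : MeasurableSpace γ}

lemma map_prodMk_eq_compProd_of_condExp {μ : Measure α} [IsFiniteMeasure μ] {X : α → β}
    {Y : α → γ} (hX : Measurable X) (hY : Measurable Y) (κ : Kernel β γ) [IsFiniteKernel κ]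
    (hκ : ∀ s, MeasurableSet s →
      (fun a => (κ (X a)).real s) =ᵐ[μ] μ⟦Y ⁻¹' s | mβ.comap X⟧) :
    μ.map (fun a => (X a, Y a)) = μ.map X ⊗ₘ κ := by
  refine ext_prod fun {t s} ht hs => ?_
  rw [← ENNReal.toReal_eq_toReal_iff' (measure_ne_top _ _) (measure_ne_top _ _),
    map_apply (hX.prodMk hY) (ht.prod hs), Set.mk_preimage_prod, compProd_apply_prod ht hs,
    setLIntegral_map ht (κ.measurable_coe hs) hX]
  have hX_t : MeasurableSet[mβ.comap X] (X ⁻¹' t) := ⟨t, ht, rfl⟩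
  calc (μ (X ⁻¹' t ∩ Y ⁻¹' s)).toReal
      = ∫ a in X ⁻¹' t, (Y ⁻¹' s).indicator (fun _ => (1 : ℝ)) a ∂μ := by
        rw [setIntegral_indicator (hY hs), setIntegral_const, smul_eq_mul, mul_one,
          measureReal_def]
    _ = ∫ a in X ⁻¹' t, (μ⟦Y ⁻¹' s | mβ.comap X⟧) a ∂μ :=
        (setIntegral_condExp hX.comap_le ((integrable_const _).indicator (hY hs)) hX_t).symm
    _ = ∫ a in X ⁻¹' t, (κ (X a)).real s ∂μ :=
        setIntegral_congr_ae (hX ht) ((hκ s hs).mono fun a ha _ => ha.symm)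
    _ = (∫⁻ a in X ⁻¹' t, κ (X a) s ∂μ).toReal :=
        integral_toReal ((κ.measurable_coe hs).comp hX).aemeasurable
          (ae_of_all _ fun a => measure_lt_top _ _)

section Comap

variable (a : Measure α) {τ : α → β} (hτ : Measurable τ)

lemma map_prodMap_compProd_comap [SFinite a] (κ : Kernel β γ) [IsSFiniteKernel κ] :
    (a ⊗ₘ κ.comap τ hτ).map (Prod.map τ id) = a.map τ ⊗ₘ κ := by
  ext s hs
  rw [map_apply (hτ.prodMap measurable_id) hs, compProd_apply (hτ.prodMap measurable_id hs),
    compProd_apply hs, lintegral_map (Kernel.measurable_kernel_prodMk_left hs) hτ]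
  rfl

lemma compProd_comap_withDensity [SFinite a] (η : Kernel β γ) [IsSFiniteKernel η]
    {f : β → γ → ℝ≥0∞} (hf : Measurable (Function.uncurry f)) [IsSFiniteKernel (η.withDensity f)] :
    a ⊗ₘ (η.withDensity f).comap τ hτ
      = (a ⊗ₘ η.comap τ hτ).withDensity (fun p => f (τ p.1) p.2) := by
  ext s hs
  rw [compProd_apply hs, withDensity_apply _ hs, ← lintegral_indicator hs,
    lintegral_compProd (f := s.indicator fun p => f (τ p.1) p.2)
      ((hf.comp (hτ.prodMap measurable_id)).indicator hs)]
  congr with x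
  rw [Kernel.comap_apply, Kernel.withDensity_apply' _ hf,
    ← lintegral_indicator (measurable_prodMk_left hs)]
  rfl

variable [MeasurableSpace.CountablyGenerated γ]

lemma rnDeriv_compProd_comap [IsFiniteMeasure a] (κ η : Kernel β γ) [IsFiniteKernel κ]
    [IsFiniteKernel η] :
    (a ⊗ₘ κ.comap τ hτ).rnDeriv (a ⊗ₘ η.comap τ hτ)
      =ᵐ[a ⊗ₘ η.comap τ hτ] fun p => κ.rnDeriv η (τ p.1) p.2 := by
  have hdecomp : κ.comap τ hτ
      = (η.withDensity (κ.rnDeriv η)).comap τ hτ + (κ.singularPart η).comap τ hτ := by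
    conv_lhs => rw [← κ.rnDeriv_add_singularPart η]
    rfl
  refine (eq_rnDeriv (f := fun p => κ.rnDeriv η (τ p.1) p.2)
    ((κ.measurable_rnDeriv η).comp (hτ.prodMap measurable_id))
    (MutuallySingular.compProd_of_right (κ := (κ.singularPart η).comap τ hτ)
      (η := η.comap τ hτ) a a
      (ae_of_all _ fun x => Kernel.mutuallySingular_singularPart κ η (τ x))) ?_).symm
  rw [hdecomp, compProd_add_right, compProd_comap_withDensity a hτ η (κ.measurable_rnDeriv η),
    add_comm]

lemma absolutelyContinuous_compProd_comap_iff [SFinite a] (κ η : Kernel β γ) [IsFiniteKernel κ]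
    [IsFiniteKernel η] :
    a ⊗ₘ κ.comap τ hτ ≪ a ⊗ₘ η.comap τ hτ ↔ a.map τ ⊗ₘ κ ≪ a.map τ ⊗ₘ η := by
  rw [absolutelyContinuous_compProd_right_iff, absolutelyContinuous_compProd_right_iff,
    ae_map_iff hτ.aemeasurable (Kernel.measurableSet_absolutelyContinuous κ η)]
  rfl

end Comap

end MeasureTheory.Measure

lemma klDiv_eq_of_rnDeriv_ae_eq {α : Type*} [MeasurableSpace α] {μ ν : Measure α}
    {g : α → ℝ≥0∞} (h : μ.rnDeriv ν =ᵐ[ν] g) :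
    klDiv μ ν = if μ ≪ ν ∧ Integrable (fun x => Real.log (g x).toReal) μ then
      ENNReal.ofReal (∫ x, Real.log (g x).toReal ∂μ) else ⊤ := by
  by_cases hμν : μ ≪ ν
  · have hlog : (fun x => Real.log (μ.rnDeriv ν x).toReal) =ᵐ[μ]
        fun x => Real.log (g x).toReal := by
      filter_upwards [hμν.ae_le h] with x hx
      rw [hx]
    rw [klDiv, integrable_congr hlog, integral_congr_ae hlog]
  · simp only [klDiv, hμν, false_and, if_false]

lemma klDiv_compProd_comap {𝒴 Ψ 𝒮 : Type*} [MeasurableSpace 𝒴] [MeasurableSpace Ψ]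
    [MeasurableSpace 𝒮] [MeasurableSpace.CountablyGenerated 𝒮] (a : Measure 𝒴)
    [IsFiniteMeasure a] {τ : 𝒴 → Ψ} (hτ : Measurable τ) (κ η : Kernel Ψ 𝒮) [IsFiniteKernel κ]
    [IsFiniteKernel η] :
    klDiv (a ⊗ₘ κ.comap τ hτ) (a ⊗ₘ η.comap τ hτ) = klDiv (a.map τ ⊗ₘ κ) (a.map τ ⊗ₘ η) := by
  have hT : Measurable (Prod.map τ (id : 𝒮 → 𝒮)) := hτ.prodMap measurable_id
  have hlog : Measurable fun p : Ψ × 𝒮 => Real.log (κ.rnDeriv η p.1 p.2).toReal :=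
    (κ.measurable_rnDeriv η).ennreal_toReal.log
  have hmap := Measure.rnDeriv_compProd_comap (a.map τ) measurable_id κ η
  simp only [Kernel.comap_id, id_eq] at hmap
  rw [klDiv_eq_of_rnDeriv_ae_eq (Measure.rnDeriv_compProd_comap a hτ κ η),
    klDiv_eq_of_rnDeriv_ae_eq hmap, Measure.absolutelyContinuous_compProd_comap_iff,
    ← Measure.map_prodMap_compProd_comap a hτ κ,
    integrable_map_measure hlog.aestronglyMeasurable hT.aemeasurable,
    integral_map hT.aemeasurable hlog.aestronglyMeasurable]
  rfl

theorem mutualInfo_eq_of_sufficient_general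
    {Ω 𝒴 𝒮 Ψ : Type*} [MeasurableSpace Ω]
    [MeasurableSpace 𝒴]
    [MeasurableSpace 𝒮] [StandardBorelSpace 𝒮]
    [MeasurableSpace Ψ]
    (P : Measure Ω) [IsProbabilityMeasure P]
    (Y : Ω → 𝒴) (hY : Measurable Y)
    (φ : Ω → 𝒮) (hφ : Measurable φ)
    (τ : 𝒴 → Ψ) (hτ : Measurable τ)
    (hsuff : ∀ f : Ω → ℝ,
      StronglyMeasurable[MeasurableSpace.comap φ inferInstance] f →
      (∃ C, ∀ ω, |f ω| ≤ C) →
      P[f | MeasurableSpace.comap (fun ω => τ (Y ω)) inferInstance]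
        =ᵐ[P] P[f | MeasurableSpace.comap Y inferInstance]) :
    klDiv (P.map (fun ω => (Y ω, φ ω))) ((P.map Y).prod (P.map φ))
      = klDiv (P.map (fun ω => (τ (Y ω), φ ω)))
          ((P.map (fun ω => τ (Y ω))).prod (P.map φ)) := by
  have : Nonempty 𝒮 := (nonempty_of_isProbabilityMeasure P).map φ
  set η := condDistrib φ (fun ω => τ (Y ω)) P
  have hYφ : P.map (fun ω => (Y ω, φ ω)) = P.map Y ⊗ₘ η.comap τ hτ := by
    refine Measure.map_prodMk_eq_compProd_of_condExp hY hφ _ fun s hs =>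
      (condDistrib_ae_eq_condExp (hτ.comp hY) hφ hs).trans (hsuff _ ?_ ⟨1, fun ω => ?_⟩)
    · exact stronglyMeasurable_const.indicator ⟨s, hs, rfl⟩
    · by_cases hω : ω ∈ φ ⁻¹' s <;> simp [hω]
  have hτY : P.map (fun ω => τ (Y ω)) = (P.map Y).map τ := (Measure.map_map hτ hY).symm
  have hτYφ : P.map (fun ω => (τ (Y ω), φ ω)) = (P.map Y).map τ ⊗ₘ η := by
    rw [← hτY]
    exact (compProd_map_condDistrib hφ.aemeasurable).symm
  have hconst : Kernel.const 𝒴 (P.map φ) = (Kernel.const Ψ (P.map φ)).comap τ hτ := rfl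
  rw [hYφ, hτYφ, hτY, ← Measure.compProd_const, ← Measure.compProd_const, hconst,
    klDiv_compProd_comap]

/-- Sufficiency: if conditioning on the statistic `τ ∘ Y` gives the same conditional
expectations for bounded `σ(φ)`-measurable functions as conditioning on `Y`, then the
mutual information is preserved: `I(Y ; φ) = I(τ ∘ Y ; φ)`. -/
theorem mutualInfo_eq_of_sufficient
    {Ω 𝒴 𝒮 Ψ : Type*} [MeasurableSpace Ω]
    [MeasurableSpace 𝒴] [StandardBorelSpace 𝒴]
    [MeasurableSpace 𝒮] [StandardBorelSpace 𝒮]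
    [MeasurableSpace Ψ] [StandardBorelSpace Ψ]
    (P : Measure Ω) [IsProbabilityMeasure P]
    (Y : Ω → 𝒴) (hY : Measurable Y)
    (φ : Ω → 𝒮) (hφ : Measurable φ)
    (τ : 𝒴 → Ψ) (hτ : Measurable τ)
    (hsuff : ∀ f : Ω → ℝ,
      StronglyMeasurable[MeasurableSpace.comap φ inferInstance] f →
      (∃ C, ∀ ω, |f ω| ≤ C) →
      P[f | MeasurableSpace.comap (fun ω => τ (Y ω)) inferInstance]
        =ᵐ[P] P[f | MeasurableSpace.comap Y inferInstance]) :
    klDiv (P.map (fun ω => (Y ω, φ ω))) ((P.map Y).prod (P.map φ))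
      = klDiv (P.map (fun ω => (τ (Y ω), φ ω)))
          ((P.map (fun ω => τ (Y ω))).prod (P.map φ)) :=
  mutualInfo_eq_of_sufficient_general P Y hY φ hφ τ hτ hsuff
end

section
/- Let (Ω, 𝓕, Q) be a probability space, let ψ : Ω → ℝ be measurable, nonnegative, with ∫ ψ dQ = 1, and define the probability measure P := Q.withDensity ψ (i.e., P(A) = ∫_A ψ dQ for A ∈ 𝓕). Let m ⊆ 𝓕 be a sub-σ-algebra and let Z : Ω → ℝ be bounded and measurable. Then P-almost surely, E_P[Z | m] · E_Q[ψ | m] = E_Q[ψ · Z | m]; moreover E_Q[ψ | m] > 0 P-almost surely, so that E_P[Z | m] = E_Q[ψ · Z | m] / E_Q[ψ | m] holds P-almost surely. -/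
open MeasureTheory
open scoped ENNReal

/-- Abstract Bayes (Kallianpur–Striebel) formula: if `P = ψ · Q` with `ψ ≥ 0`, `∫ ψ dQ = 1`,
then for any bounded measurable `Z` and sub-σ-algebra `m`,
`E_P[Z|m] · E_Q[ψ|m] = E_Q[ψ Z|m]` holds `P`-a.s., `E_Q[ψ|m] > 0` holds `P`-a.s., and hence
`E_P[Z|m] = E_Q[ψ Z|m] / E_Q[ψ|m]` holds `P`-a.s. -/
theorem bayes_formula
    {Ω : Type*} {m : MeasurableSpace Ω} {mΩ : MeasurableSpace Ω}
    (Q : Measure Ω) [IsProbabilityMeasure Q]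
    (ψ : Ω → ℝ) (hψ_meas : Measurable ψ) (hψ_nonneg : ∀ ω, 0 ≤ ψ ω)
    (hψ_int : ∫ ω, ψ ω ∂Q = 1)
    (P : Measure Ω) (hP : P = Q.withDensity (fun ω => ENNReal.ofReal (ψ ω)))
    (hm : m ≤ mΩ)
    (Z : Ω → ℝ) (hZ_meas : Measurable Z) (hZ_bdd : ∃ C, ∀ ω, |Z ω| ≤ C) :
    ((fun ω => (P[Z | m]) ω * (Q[ψ | m]) ω)
        =ᵐ[P] Q[fun ω => ψ ω * Z ω | m]) ∧
    (∀ᵐ ω ∂P, 0 < (Q[ψ | m]) ω) ∧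
    ((P[Z | m]) =ᵐ[P] fun ω => (Q[fun ω' => ψ ω' * Z ω' | m]) ω / (Q[ψ | m]) ω) := by
  classical
  obtain ⟨C₀, hC₀⟩ := hZ_bdd
  set C : ℝ := max C₀ 0 with hCdef
  have hC0 : 0 ≤ C := le_max_right _ _
  have hC : ∀ ω, |Z ω| ≤ C := fun ω => le_trans (hC₀ ω) (le_max_left _ _)
  have hZ_meas' : Measurable[mΩ] Z := hZ_meas
  -- basic integrability facts
  have hψ_int' : Integrable ψ Q := integrable_of_integral_eq_one hψ_int
  have hψZ_int : Integrable (fun ω => ψ ω * Z ω) Q := by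
    have : Integrable (fun ω => Z ω * ψ ω) Q :=
      hψ_int'.bdd_mul hZ_meas'.aestronglyMeasurable (Filter.Eventually.of_forall fun ω => by
        simpa [Real.norm_eq_abs] using hC ω)
    exact this.congr (Filter.Eventually.of_forall fun ω => mul_comm _ _)
  -- absolute continuity and finiteness of P
  have hP_ac : P ≪ Q := by
    rw [hP]; exact withDensity_absolutelyContinuous Q _
  have hP_univ : P Set.univ = 1 := by
    rw [hP, withDensity_apply _ MeasurableSet.univ, Measure.restrict_univ,
      ← ofReal_integral_eq_lintegral_ofReal hψ_int'
        (Filter.Eventually.of_forall hψ_nonneg), hψ_int, ENNReal.ofReal_one]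
  haveI hPfin : IsFiniteMeasure P := ⟨by rw [hP_univ]; exact ENNReal.one_lt_top⟩
  haveI : SigmaFinite (P.trim hm) := by
    haveI : IsFiniteMeasure (P.trim hm) :=
      ⟨by rw [trim_measurableSet_eq hm MeasurableSet.univ]; exact measure_lt_top P _⟩
    infer_instance
  -- notation
  set φ : Ω → ℝ := Q[ψ | m] with hφdef
  set g : Ω → ℝ := Q[fun ω => ψ ω * Z ω | m] with hgdef
  have hφ_sm : StronglyMeasurable[m] φ := stronglyMeasurable_condExp
  have hg_sm : StronglyMeasurable[m] g := stronglyMeasurable_condExp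
  have hφ_nonneg : 0 ≤ᵐ[Q] φ := condExp_nonneg (Filter.Eventually.of_forall hψ_nonneg)
  -- the bound |g| ≤ C * φ a.e.
  have h_upper : g ≤ᵐ[Q] fun ω => C * φ ω := by
    have h1 : Q[fun ω => ψ ω * Z ω | m] ≤ᵐ[Q] Q[fun ω => C * ψ ω | m] := by
      refine condExp_mono hψZ_int (hψ_int'.const_mul C)
        (Filter.Eventually.of_forall fun ω => ?_)
      calc ψ ω * Z ω ≤ ψ ω * C := by
            exact mul_le_mul_of_nonneg_left ((abs_le.mp (hC ω)).2) (hψ_nonneg ω)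
        _ = C * ψ ω := mul_comm _ _
    have h2 : (Q[fun ω => C * ψ ω | m]) =ᵐ[Q] fun ω => C * φ ω := by
      have := condExp_smul (μ := Q) (m := m) (C : ℝ) ψ
      exact this
    filter_upwards [h1, h2] with ω h1 h2
    exact h2 ▸ h1
  have h_lower : (fun ω => -C * φ ω) ≤ᵐ[Q] g := by
    have h1 : Q[fun ω => (-C) * ψ ω | m] ≤ᵐ[Q] Q[fun ω => ψ ω * Z ω | m] := by
      refine condExp_mono (hψ_int'.const_mul (-C)) hψZ_int
        (Filter.Eventually.of_forall fun ω => ?_)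
      calc (-C) * ψ ω = ψ ω * (-C) := mul_comm _ _
        _ ≤ ψ ω * Z ω :=
            mul_le_mul_of_nonneg_left (neg_le.mp (neg_le.mpr (abs_le.mp (hC ω)).1)) (hψ_nonneg ω)
    have h2 : (Q[fun ω => (-C) * ψ ω | m]) =ᵐ[Q] fun ω => (-C) * φ ω := by
      have := condExp_smul (μ := Q) (m := m) ((-C) : ℝ) ψ
      exact this
    filter_upwards [h1, h2] with ω h1 h2
    exact h2 ▸ h1
  have hg_bound : ∀ᵐ ω ∂Q, |g ω| ≤ C * φ ω := by
    filter_upwards [h_upper, h_lower] with ω h1 h2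
    exact abs_le.mpr ⟨by simpa [neg_mul] using h2, h1⟩
  -- positivity of φ under P
  have hφ_meas : Measurable[m] φ := hφ_sm.measurable
  set s : Set Ω := {ω | φ ω ≤ 0} with hsdef
  have hs_m : MeasurableSet[m] s := hφ_meas measurableSet_Iic
  have hs : MeasurableSet[mΩ] s := hm _ hs_m
  have h_int_s : ∫ ω in s, ψ ω ∂Q = 0 := by
    have h1 : ∫ ω in s, ψ ω ∂Q = ∫ ω in s, φ ω ∂Q :=
      (setIntegral_condExp hm hψ_int' hs_m).symm
    have h2 : ∫ ω in s, φ ω ∂Q ≤ 0 :=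
      @setIntegral_nonpos Ω mΩ Q φ s hs fun ω hω => hω
    have h3 : 0 ≤ ∫ ω in s, ψ ω ∂Q :=
      @setIntegral_nonneg Ω mΩ Q ψ s hs fun ω _ => hψ_nonneg ω
    linarith [h1 ▸ h2]
  have hPs : P s = 0 := by
    rw [hP, withDensity_apply _ hs,
      ← ofReal_integral_eq_lintegral_ofReal (Integrable.integrableOn (s := s) hψ_int')
        (Filter.Eventually.of_forall hψ_nonneg), h_int_s, ENNReal.ofReal_zero]
  have hφ_pos : ∀ᵐ ω ∂P, 0 < φ ω := by
    rw [ae_iff]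
    convert hPs using 2
    ext ω
    simp [hsdef, not_lt]
  -- the candidate conditional expectation
  set h : Ω → ℝ := fun ω => g ω / φ ω with hhdef
  have hh_sm : StronglyMeasurable[m] h :=
    ((hg_sm.measurable.div hφ_sm.measurable).stronglyMeasurable)
  have hh_meas : Measurable[mΩ] h := (hh_sm.measurable).mono hm le_rfl
  have hg_meas : Measurable[mΩ] g := (hg_sm.measurable).mono hm le_rfl
  have hφ_meas' : Measurable[mΩ] φ := (hφ_sm.measurable).mono hm le_rfl
  have hh_bound : ∀ᵐ ω ∂Q, |h ω| ≤ C := by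
    filter_upwards [hg_bound, hφ_nonneg] with ω h1 h2
    rcases eq_or_lt_of_le h2 with h3 | h3
    · have hg0 : g ω = 0 := by
        have := h1; rw [← h3] at this
        simpa using abs_nonpos_iff.mp (by simpa using this)
      simpa [hhdef, hg0] using hC0
    · rw [hhdef]
      rw [abs_div, abs_of_pos h3, div_le_iff₀ h3]
      calc |g ω| ≤ C * φ ω := h1
        _ = C * φ ω := rfl
  have hhφ_eq : (fun ω => h ω * φ ω) =ᵐ[Q] g := by
    filter_upwards [hg_bound, hφ_nonneg] with ω h1 h2
    rcases eq_or_lt_of_le h2 with h3 | h3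
    · have hg0 : g ω = 0 := by
        have := h1; rw [← h3] at this
        simpa using abs_nonpos_iff.mp (by simpa using this)
      simp [hhdef, hg0]
    · simp [hhdef, div_mul_cancel₀ _ (ne_of_gt h3)]
  -- change of variables for set integrals
  have key : ∀ (u : Ω → ℝ), ∀ t : Set Ω, MeasurableSet[mΩ] t →
      ∫ x in t, u x ∂P = ∫ x in t, ψ x * u x ∂Q := by
    intro u t ht
    rw [hP]
    have heq : (fun ω => ENNReal.ofReal (ψ ω)) = fun ω => ((ψ ω).toNNReal : ℝ≥0∞) := rfl
    rw [heq, @setIntegral_withDensity_eq_setIntegral_smul Ω ℝ mΩ Q _ _ _ hψ_meas.real_toNNReal u t ht]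
    refine integral_congr_ae (Filter.Eventually.of_forall fun x => ?_)
    simp [NNReal.smul_def, Real.coe_toNNReal _ (hψ_nonneg x)]
  -- integrability of Z and h with respect to P
  have hZ_int_P : Integrable Z P := by
    refine Integrable.mono' (integrable_const C) hZ_meas'.aestronglyMeasurable ?_
    exact Filter.Eventually.of_forall fun ω => by simpa [Real.norm_eq_abs] using hC ω
  have hψh_int : Integrable (fun ω => h ω * ψ ω) Q :=
    hψ_int'.bdd_mul hh_meas.aestronglyMeasurable
      (by filter_upwards [hh_bound] with ω hω; simpa [Real.norm_eq_abs] using hω)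
  have hh_int_P : Integrable h P := by
    refine Integrable.mono' (integrable_const C) hh_meas.aestronglyMeasurable ?_
    filter_upwards [hP_ac.ae_le hh_bound] with ω hω
    simpa [Real.norm_eq_abs] using hω
  -- main identity via uniqueness of conditional expectation
  have hmain : h =ᵐ[P] P[Z | m] := by
    refine ae_eq_condExp_of_forall_setIntegral_eq hm hZ_int_P
      (fun t ht _ => Integrable.integrableOn (s := t) hh_int_P) (fun t ht _ => ?_)
      (hh_sm.aestronglyMeasurable)
    have htm : MeasurableSet[mΩ] t := hm _ ht
    rw [key h t htm, key Z t htm]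
    have e1 : ∫ x in t, ψ x * h x ∂Q = ∫ x in t, h x * ψ x ∂Q :=
      integral_congr_ae (Filter.Eventually.of_forall fun x => mul_comm _ _)
    have e2 : ∫ x in t, h x * ψ x ∂Q = ∫ x in t, (Q[fun ω => h ω * ψ ω | m]) x ∂Q :=
      (setIntegral_condExp hm hψh_int ht).symm
    have e3 : (Q[fun ω => h ω * ψ ω | m]) =ᵐ[Q] fun ω => h ω * φ ω := by
      have := condExp_mul_of_stronglyMeasurable_left (μ := Q) hh_sm
        hψh_int hψ_int'
      exact this
    have e4 : ∫ x in t, (Q[fun ω => h ω * ψ ω | m]) x ∂Q = ∫ x in t, g x ∂Q := by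
      refine integral_congr_ae (ae_restrict_of_ae ?_)
      filter_upwards [e3, hhφ_eq] with ω h1 h2
      rw [h1, h2]
    have e5 : ∫ x in t, ψ x * Z x ∂Q = ∫ x in t, g x ∂Q :=
      (setIntegral_condExp hm hψZ_int ht).symm
    rw [e1, e2, e4, e5]
  refine ⟨?_, hφ_pos, hmain.symm⟩
  have hhφ_eq_P : (fun ω => h ω * φ ω) =ᵐ[P] g := hhφ_eq.filter_mono hP_ac.ae_le
  filter_upwards [hmain, hhφ_eq_P] with ω h1 h2
  rw [← h1, h2]
end

section
/- Let (Ω, 𝓕, P) be a probability space, (Ψ, 𝓖) a measurable space, X : Ω → Ψ measurable, and f : Ψ → (0, ∞) measurable with ∫ f(X ω) dP(ω) = 1. Let Q := P.withDensity (fun ω ↦ f(X ω)), a probability measure. Assume ω ↦ log f(X ω) is P-integrable. Then ∫_Ψ log( ((P.map X).rnDeriv (Q.map X)) x ).toReal d(P.map X)(x) = ∫_Ω log( (P.rnDeriv Q ω).toReal ) dP(ω) = − ∫_Ω log f(X ω) dP(ω). -/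
open MeasureTheory
open scoped ENNReal

/-!
Since the density `f ∘ X` of `Q` factors through `X`, the image law `Q.map X` is
`(P.map X).withDensity f`. On either space `dP/dQ` is therefore a.e. the reciprocal of the
density, so both log-density integrals equal `-∫ log f`, the one on the image space after the
change of variables along `X`.
-/

lemma MeasureTheory.Measure.map_withDensity_comp {Ω Ψ : Type*} {mΩ : MeasurableSpace Ω}
    {mΨ : MeasurableSpace Ψ} (μ : Measure Ω) {X : Ω → Ψ} (hX : Measurable X) {g : Ψ → ℝ≥0∞}
    (hg : Measurable g) :
    (μ.withDensity fun ω => g (X ω)).map X = (μ.map X).withDensity g := by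
  ext s hs
  rw [Measure.map_apply hX hs, withDensity_apply _ (hX hs), withDensity_apply _ hs,
    setLIntegral_map hs hg hX]

lemma MeasureTheory.Measure.rnDeriv_withDensity_self_right {α : Type*} {mα : MeasurableSpace α}
    (μ : Measure α) [SigmaFinite μ] {g : α → ℝ≥0∞} (hg : AEMeasurable g μ)
    (hg_ne_zero : ∀ᵐ x ∂μ, g x ≠ 0) (hg_ne_top : ∀ᵐ x ∂μ, g x ≠ ∞) :
    μ.rnDeriv (μ.withDensity g) =ᵐ[μ] fun x => (g x)⁻¹ := by
  filter_upwards [Measure.rnDeriv_withDensity_right μ μ hg hg_ne_zero hg_ne_top,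
    Measure.rnDeriv_self μ] with x hx hx_self
  rw [hx, hx_self, mul_one]

lemma MeasureTheory.integral_log_rnDeriv_withDensity_ofReal {α : Type*}
    {mα : MeasurableSpace α} (μ : Measure α) [SigmaFinite μ] {f : α → ℝ}
    (hf : AEMeasurable f μ) (hf_pos : ∀ᵐ x ∂μ, 0 < f x) :
    ∫ x, Real.log (μ.rnDeriv (μ.withDensity fun x => ENNReal.ofReal (f x)) x).toReal ∂μ
      = -∫ x, Real.log (f x) ∂μ := by
  have h_rnDeriv := μ.rnDeriv_withDensity_self_right hf.ennreal_ofReal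
    (by filter_upwards [hf_pos] with x hx using ENNReal.ofReal_ne_zero_iff.mpr hx)
    (ae_of_all _ fun _ => ENNReal.ofReal_ne_top)
  rw [← integral_neg]
  refine integral_congr_ae ?_
  filter_upwards [h_rnDeriv, hf_pos] with x hx hx_pos
  rw [hx, ENNReal.toReal_inv, ENNReal.toReal_ofReal hx_pos.le, Real.log_inv]

theorem log_rnDeriv_pushforward_eq_general
    {Ω Ψ : Type*} {mΩ : MeasurableSpace Ω} {mΨ : MeasurableSpace Ψ}
    (P : Measure Ω) [IsProbabilityMeasure P]
    (X : Ω → Ψ) (hX : Measurable X)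
    (f : Ψ → ℝ) (hf_meas : Measurable f) (hf_pos : ∀ x, 0 < f x)
    (Q : Measure Ω) (hQ : Q = P.withDensity (fun ω => ENNReal.ofReal (f (X ω)))) :
    (∫ x, Real.log (((P.map X).rnDeriv (Q.map X)) x).toReal ∂(P.map X)
        = ∫ ω, Real.log ((P.rnDeriv Q ω).toReal) ∂P) ∧
    (∫ ω, Real.log ((P.rnDeriv Q ω).toReal) ∂P
        = - ∫ ω, Real.log (f (X ω)) ∂P) := by
  subst hQ
  have h_base := integral_log_rnDeriv_withDensity_ofReal P (hf_meas.comp hX).aemeasurable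
    (ae_of_all _ fun ω => hf_pos (X ω))
  have h_image : ∫ x, Real.log (((P.map X).rnDeriv
        ((P.withDensity fun ω => ENNReal.ofReal (f (X ω))).map X)) x).toReal ∂(P.map X)
      = -∫ ω, Real.log (f (X ω)) ∂P := by
    rw [Measure.map_withDensity_comp P hX hf_meas.ennreal_ofReal,
      integral_log_rnDeriv_withDensity_ofReal _ hf_meas.aemeasurable (ae_of_all _ hf_pos),
      integral_map hX.aemeasurable hf_meas.log.aestronglyMeasurable]
  exact ⟨h_image.trans h_base.symm, h_base⟩

/-- If the change-of-measure density factors through `X` as a positive function `f ∘ X`,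
then the KL-type integral between the pushforward laws of `X` equals the corresponding
integral on the underlying space, and both equal `-E_P[log f(X)]`. -/
theorem log_rnDeriv_pushforward_eq
    {Ω Ψ : Type*} {mΩ : MeasurableSpace Ω} {mΨ : MeasurableSpace Ψ}
    (P : Measure Ω) [IsProbabilityMeasure P]
    (X : Ω → Ψ) (hX : Measurable X)
    (f : Ψ → ℝ) (hf_meas : Measurable f) (hf_pos : ∀ x, 0 < f x)
    (hf_int : ∫ ω, f (X ω) ∂P = 1)
    (Q : Measure Ω) (hQ : Q = P.withDensity (fun ω => ENNReal.ofReal (f (X ω))))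
    (hlog_int : Integrable (fun ω => Real.log (f (X ω))) P) :
    (∫ x, Real.log (((P.map X).rnDeriv (Q.map X)) x).toReal ∂(P.map X)
        = ∫ ω, Real.log ((P.rnDeriv Q ω).toReal) ∂P) ∧
    (∫ ω, Real.log ((P.rnDeriv Q ω).toReal) ∂P
        = - ∫ ω, Real.log (f (X ω)) ∂P) :=
  log_rnDeriv_pushforward_eq_general (mΩ := mΩ) (mΨ := mΨ) P X hX f hf_meas hf_pos Q hQ
end
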